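/- Let k be a field of characteristic p > 0, G a nontrivial finite p-group, and S ∈ 𝔗𝔰. Then S is isomorphic in 𝔗𝔰 to a standard subalgebra of D_k — i.e. there exist morphisms ι ∈ 𝔗𝔰(S, D_k) and π ∈ 𝔗𝔰(D_k, S) with π∘ι = id_S — if and only if S is cyclic (generated as a k-algebra by the G-orbit of a single point) and s-projective. -/

import Mathlib

open scoped TensorProduct

set_option synthInstance.maxHeartbeats 1000000
set_option maxHeartbeats 1000000
set_option linter.unusedSectionVars false
set_option linter.unusedVariables false

universe u

section TSPreamble

variable (k G : Type u) [Field k] [Group G] [Fintype G]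

/-- The invariant subalgebra `A^G` of a `k`-`G`-algebra `A`. -/
def invAlg (A : Type u) [CommRing A] [Algebra k A] [MulSemiringAction G A]
    [SMulCommClass G k A] : Subalgebra k A where
  carrier := {a | ∀ g : G, g • a = a}
  mul_mem' := fun ha hb g => by rw [smul_mul', ha g, hb g]
  add_mem' := fun ha hb g => by rw [smul_add, ha g, hb g]
  algebraMap_mem' := fun c g => smul_algebraMap g c

/-- A `k`-`G`-algebra is trace-surjective if every invariant element is in the
image of the transfer (trace) map `a ↦ ∑_{g ∈ G} g • a`. -/
def IsTraceSurjective (A : Type u) [CommRing A] [MulSemiringAction G A] : Prop :=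
  ∀ b : A, (∀ g : G, g • b = b) → ∃ a : A, (∑ g : G, g • a) = b

/-- Membership in the category `𝔗𝔰` of finitely generated trace-surjective
`k`-`G`-algebras. -/
def IsTS (A : Type u) [CommRing A] [Algebra k A] [MulSemiringAction G A] : Prop :=
  Algebra.FiniteType k A ∧ IsTraceSurjective G A

/-- `G`-equivariance of a map. -/
def IsEquivariant {A B : Type u} [SMul G A] [SMul G B] (f : A → B) : Prop :=
  ∀ (g : G) (a : A), f (g • a) = g • f a

/-- `W` is a universal (weakly initial) object of `𝔗𝔰`: every object of `𝔗𝔰`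
receives at least one morphism from `W`. -/
def IsUniversal (W : Type u) [CommRing W] [Algebra k W] [MulSemiringAction G W] : Prop :=
  ∀ (A : Type u) [CommRing A] [Algebra k A] [MulSemiringAction G A] [SMulCommClass G k A],
    IsTS k G A → ∃ f : W →ₐ[k] A, IsEquivariant G ⇑f

/-- `P` is an s-projective object of `𝔗𝔰`: any morphism from `P` lifts along
surjective morphisms of `𝔗𝔰`. -/
def IsSProjective (P : Type u) [CommRing P] [Algebra k P] [MulSemiringAction G P] : Prop :=
  ∀ (A B : Type u) [CommRing A] [Algebra k A] [MulSemiringAction G A] [SMulCommClass G k A]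
    [CommRing B] [Algebra k B] [MulSemiringAction G B] [SMulCommClass G k B],
    IsTS k G A → IsTS k G B →
    ∀ (α : A →ₐ[k] B), IsEquivariant G ⇑α → Function.Surjective ⇑α →
    ∀ (β : P →ₐ[k] B), IsEquivariant G ⇑β →
    ∃ θ : P →ₐ[k] A, IsEquivariant G ⇑θ ∧ α.comp θ = β

/-- `Γ` is an s-generator of `𝔗𝔰`: every object of `𝔗𝔰` is the surjective image of a
finite tensor power of `Γ`; equivalently, for every `R ∈ 𝔗𝔰` there are finitely many
morphisms `Γ → R` whose images together generate `R` as a `k`-algebra. -/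
def IsSGenerator (Γ : Type u) [CommRing Γ] [Algebra k Γ] [MulSemiringAction G Γ] : Prop :=
  ∀ (R : Type u) [CommRing R] [Algebra k R] [MulSemiringAction G R] [SMulCommClass G k R],
    IsTS k G R →
    ∃ (ℓ : ℕ) (f : Fin ℓ → (Γ →ₐ[k] R)),
      (∀ i, IsEquivariant G ⇑(f i)) ∧
      Algebra.adjoin k (⋃ i, Set.range ⇑(f i)) = ⊤

end TSPreamble

section QuotAction

variable (k G : Type u) [Field k] [Group G] [Fintype G]

/-- The induced `G`-action on the quotient of a `k`-`G`-algebra by a `G`-stable ideal. -/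
noncomputable def quotMSA (A : Type u) [CommRing A] [MulSemiringAction G A]
    (I : Ideal A) (hI : ∀ g : G, ∀ x ∈ I, g • x ∈ I) :
    MulSemiringAction G (A ⧸ I) where
  smul g := Ideal.quotientMap I (MulSemiringAction.toRingHom G A g)
    (fun x hx => Ideal.mem_comap.mpr (hI g x hx))
  one_smul x := by
    obtain ⟨y, rfl⟩ := Ideal.Quotient.mk_surjective x
    show Ideal.quotientMap I _ _ _ = _
    rw [Ideal.quotientMap_mk]
    show Ideal.Quotient.mk I ((1 : G) • y) = _
    rw [one_smul]
  mul_smul g h x := by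
    obtain ⟨y, rfl⟩ := Ideal.Quotient.mk_surjective x
    show Ideal.quotientMap I _ _ _ =
      Ideal.quotientMap I _ _ (Ideal.quotientMap I _ _ _)
    rw [Ideal.quotientMap_mk, Ideal.quotientMap_mk, Ideal.quotientMap_mk]
    show Ideal.Quotient.mk I ((g * h) • y) = Ideal.Quotient.mk I (g • h • y)
    rw [mul_smul]
  smul_zero g := map_zero _
  smul_add g := map_add _
  smul_one g := map_one _
  smul_mul g := map_mul _

/-- The quotient action commutes with scalars. -/
lemma quotSCC (A : Type u) [CommRing A] [Algebra k A] [MulSemiringAction G A]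
    [SMulCommClass G k A] (I : Ideal A) (hI : ∀ g : G, ∀ x ∈ I, g • x ∈ I) :
    letI := quotMSA G A I hI
    SMulCommClass G k (A ⧸ I) := by
  letI := quotMSA G A I hI
  refine ⟨fun g c x => ?_⟩
  obtain ⟨y, rfl⟩ := Ideal.Quotient.mk_surjective x
  show Ideal.quotientMap I _ _ (Ideal.Quotient.mk I (c • y))
      = c • Ideal.quotientMap I _ _ (Ideal.Quotient.mk I y)
  rw [Ideal.quotientMap_mk, Ideal.quotientMap_mk]
  show Ideal.Quotient.mk I (g • c • y) = Ideal.Quotient.mk I (c • g • y)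
  rw [smul_comm]

end QuotAction

section DkDef

variable (k G : Type u) [Field k] [Group G] [Fintype G]

/-- The (left-)regular `G`-action on `k[X_g : g ∈ G]`, `h • X_g = X_{h g}`. -/
noncomputable instance mvRegMSA : MulSemiringAction G (MvPolynomial G k) where
  smul h p := MvPolynomial.rename (fun g => h * g) p
  one_smul p := by
    show MvPolynomial.rename _ p = p
    have : (fun g : G => (1 : G) * g) = id := by funext g; simp
    rw [this, MvPolynomial.rename_id]; rfl
  mul_smul g h p := by
    show MvPolynomial.rename _ p = MvPolynomial.rename _ (MvPolynomial.rename _ p)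
    rw [MvPolynomial.rename_rename]
    have : ((fun x : G => g * x) ∘ fun x : G => h * x) = fun x : G => (g * h) * x := by
      funext x; simp [mul_assoc]
    rw [this]
  smul_zero g := map_zero _
  smul_add g := map_add _
  smul_one g := map_one _
  smul_mul g := map_mul _

noncomputable instance mvRegSCC : SMulCommClass G k (MvPolynomial G k) :=
  ⟨fun g c p => map_smul (MvPolynomial.rename (fun x => g * x)).toLinearMap c p⟩

@[simp] lemma mvReg_smul_X (h g : G) :
    h • (MvPolynomial.X g : MvPolynomial G k) = MvPolynomial.X (h * g) := by
  show MvPolynomial.rename _ (MvPolynomial.X g) = _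
  rw [MvPolynomial.rename_X]

/-- The ideal `(∑_{g ∈ G} X_g − 1)` of `k[X_g : g ∈ G]`. -/
noncomputable def dIdeal : Ideal (MvPolynomial G k) :=
  Ideal.span {(∑ g : G, MvPolynomial.X g) - 1}

lemma dIdeal_stable : ∀ g : G, ∀ x ∈ dIdeal k G, g • x ∈ dIdeal k G := by
  intro g x hx
  rw [dIdeal, Ideal.mem_span_singleton] at hx ⊢
  obtain ⟨c, rfl⟩ := hx
  refine ⟨g • c, ?_⟩
  rw [smul_mul']
  congr 1
  rw [smul_sub, smul_one, Finset.smul_sum]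
  congr 1
  apply Fintype.sum_equiv (Equiv.mulLeft g)
  intro h
  rw [mvReg_smul_X]
  rfl

/-- The dehomogenized symmetric algebra `D_k` of the regular representation:
`k[X_g : g ∈ G]/(∑ X_g − 1)` with the regular `G`-action. -/
abbrev Dk : Type u := MvPolynomial G k ⧸ dIdeal k G

noncomputable instance : MulSemiringAction G (Dk k G) :=
  quotMSA G (MvPolynomial G k) (dIdeal k G) (dIdeal_stable k G)

noncomputable instance : SMulCommClass G k (Dk k G) :=
  quotSCC k G (MvPolynomial G k) (dIdeal k G) (dIdeal_stable k G)

/-- The generators `x_g ∈ D_k`, images of the variables `X_g`. -/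
noncomputable def xg (g : G) : Dk k G := Ideal.Quotient.mk (dIdeal k G) (MvPolynomial.X g)

end DkDef

section Helpers

variable (k G : Type u) [Field k] [Group G] [Fintype G]

lemma Dk_smul_mk (g : G) (p : MvPolynomial G k) :
    g • (Ideal.Quotient.mk (dIdeal k G) p : Dk k G)
      = Ideal.Quotient.mk (dIdeal k G) (g • p) := by
  show Ideal.quotientMap (dIdeal k G)
    (MulSemiringAction.toRingHom G (MvPolynomial G k) g) _ _ = _
  rw [Ideal.quotientMap_mk]
  rfl

lemma Dk_smul_xg (g h : G) : g • xg k G h = xg k G (g * h) := by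
  unfold xg
  rw [Dk_smul_mk]
  congr 1
  exact mvReg_smul_X k G g h

lemma Dk_sum_xg : (∑ g : G, xg k G g) = 1 := by
  unfold xg
  rw [← map_sum]
  have h1 : (1 : Dk k G) = Ideal.Quotient.mk (dIdeal k G) 1 := rfl
  rw [h1, Ideal.Quotient.eq]
  exact Ideal.subset_span rfl

variable (A : Type u) [CommRing A] [Algebra k A] [MulSemiringAction G A]
  [SMulCommClass G k A]

/-- The morphism `D_k → A` determined by a point `a ∈ A` of trace 1, `x_g ↦ g • a`. -/
noncomputable def pointHom (a : A) (ha : (∑ g : G, g • a) = 1) : Dk k G →ₐ[k] A :=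
  Ideal.Quotient.liftₐ (dIdeal k G) (MvPolynomial.aeval (fun g : G => g • a)) (by
    intro x hx
    rw [dIdeal, Ideal.mem_span_singleton] at hx
    obtain ⟨c, rfl⟩ := hx
    rw [map_mul]
    have h0 : (MvPolynomial.aeval (fun g : G => g • a))
        (((∑ g : G, MvPolynomial.X g) : MvPolynomial G k) - 1) = (0 : A) := by
      rw [map_sub, map_sum, map_one]
      simp only [MvPolynomial.aeval_X]
      rw [ha, sub_self]
    rw [h0, zero_mul])

lemma pointHom_mk (a : A) (ha : (∑ g : G, g • a) = 1) (p : MvPolynomial G k) :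
    pointHom k G A a ha (Ideal.Quotient.mk (dIdeal k G) p)
      = MvPolynomial.aeval (fun g : G => g • a) p :=
  Ideal.Quotient.liftₐ_apply _ _ _ _

lemma pointHom_xg (a : A) (ha : (∑ g : G, g • a) = 1) (g : G) :
    pointHom k G A a ha (xg k G g) = g • a := by
  unfold xg
  rw [pointHom_mk]
  simp

lemma pointHom_equivariant (a : A) (ha : (∑ g : G, g • a) = 1) :
    IsEquivariant G ⇑(pointHom k G A a ha) := by
  intro g x
  obtain ⟨p, rfl⟩ := Ideal.Quotient.mk_surjective x
  rw [Dk_smul_mk, pointHom_mk, pointHom_mk]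
  have h1 : (g • p : MvPolynomial G k) = MvPolynomial.rename (fun x => g * x) p := rfl
  rw [h1, MvPolynomial.aeval_rename]
  have h2 : g • (MvPolynomial.aeval (fun h : G => h • a) p)
      = (MulSemiringAction.toAlgHom k A g) (MvPolynomial.aeval (fun h : G => h • a) p) := rfl
  rw [h2, MvPolynomial.comp_aeval_apply]
  have h3 : ((fun g' : G => g' • a) ∘ fun x => g * x)
      = fun i : G => (MulSemiringAction.toAlgHom k A g) (i • a) := by
    funext h
    show ((g * h) • a) = g • (h • a)
    rw [mul_smul]
  rw [h3]

lemma Dk_algHom_ext (φ ψ : Dk k G →ₐ[k] A) (h : ∀ g : G, φ (xg k G g) = ψ (xg k G g)) :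
    φ = ψ := by
  have h1 : φ.comp (Ideal.Quotient.mkₐ k (dIdeal k G))
      = ψ.comp (Ideal.Quotient.mkₐ k (dIdeal k G)) :=
    MvPolynomial.algHom_ext (fun g => h g)
  ext x
  obtain ⟨p, rfl⟩ := Ideal.Quotient.mkₐ_surjective k (dIdeal k G) x
  exact AlgHom.congr_fun h1 p

lemma Dk_isTS : IsTS k G (Dk k G) := by
  constructor
  · exact Algebra.FiniteType.of_surjective
      (Ideal.Quotient.mkₐ k (dIdeal k G)) (Ideal.Quotient.mkₐ_surjective k _)
  · intro b hb
    refine ⟨b * xg k G 1, ?_⟩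
    have h1 : ∀ g : G, g • (b * xg k G 1) = b * xg k G g := by
      intro g
      rw [smul_mul', hb g, Dk_smul_xg, mul_one]
    rw [Finset.sum_congr rfl (fun g _ => h1 g), ← Finset.mul_sum, Dk_sum_xg, mul_one]

lemma Dk_adjoin : Algebra.adjoin k (Set.range fun g : G => g • xg k G 1) = ⊤ := by
  have h1 : (fun g : G => g • xg k G 1) = xg k G := by
    funext g
    rw [Dk_smul_xg, mul_one]
  rw [h1]
  have h2 : Set.range (xg k G)
      = ⇑(Ideal.Quotient.mkₐ k (dIdeal k G)) '' Set.range (MvPolynomial.X : G → MvPolynomial G k) := by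
    rw [← Set.range_comp]
    rfl
  rw [h2, ← AlgHom.map_adjoin, MvPolynomial.adjoin_range_X, Algebra.map_top,
    (AlgHom.range_eq_top _).mpr (Ideal.Quotient.mkₐ_surjective k _)]

/-- `D_k` is s-projective. -/
lemma Dk_sProjective : IsSProjective k G (Dk k G) := by
  intro A B _ _ _ _ _ _ _ _ hA hB α hαe hαs β hβe
  set b : B := β (xg k G 1) with hbdef
  have hb : (∑ g : G, g • b) = 1 := by
    have h1 : ∀ g : G, g • b = β (xg k G g) := by
      intro g
      rw [hbdef, ← hβe, Dk_smul_xg, mul_one]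
    rw [Finset.sum_congr rfl (fun g _ => h1 g), ← map_sum, Dk_sum_xg, map_one]
  obtain ⟨a₁, ha₁⟩ := hαs b
  obtain ⟨a₀, ha₀⟩ := hA.2 1 (fun g => smul_one g)
  set u : A := (∑ g : G, g • a₁) - 1 with hudef
  have hu_inv : ∀ g : G, g • u = u := by
    intro g
    rw [hudef, smul_sub, smul_one, Finset.smul_sum]
    congr 1
    apply Fintype.sum_equiv (Equiv.mulLeft g)
    intro h
    show g • h • a₁ = (g * h) • a₁
    rw [mul_smul]
  set a : A := a₁ - u * a₀ with hadef
  have htr : (∑ g : G, g • a) = 1 := by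
    have h1 : ∀ g : G, g • a = g • a₁ - u * (g • a₀) := by
      intro g
      rw [hadef, smul_sub, smul_mul', hu_inv g]
    rw [Finset.sum_congr rfl (fun g _ => h1 g), Finset.sum_sub_distrib, ← Finset.mul_sum,
      ha₀, mul_one, hudef]
    ring
  have hαu : α u = 0 := by
    have h1 : α (∑ g : G, g • a₁) = ∑ g : G, g • b := by
      rw [map_sum]
      exact Finset.sum_congr rfl (fun g _ => by rw [hαe, ha₁])
    rw [hudef, map_sub, map_one, h1, hb, sub_self]
  have hαa : α a = b := by
    rw [hadef, map_sub, map_mul, hαu, zero_mul, sub_zero, ha₁]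
  refine ⟨pointHom k G A a htr, pointHom_equivariant k G A a htr, ?_⟩
  apply Dk_algHom_ext
  intro g
  show α (pointHom k G A a htr (xg k G g)) = β (xg k G g)
  rw [pointHom_xg, hαe, hαa, hbdef, ← hβe, Dk_smul_xg, mul_one]

end Helpers

/-- Let `k` be a field of characteristic `p > 0`, `G` a nontrivial
finite `p`-group and `S ∈ 𝔗𝔰`.  Then `S` is isomorphic in `𝔗𝔰` to a standard subalgebra
of `D_k` — i.e. there exist morphisms `ι ∈ 𝔗𝔰(S, D_k)` and `π ∈ 𝔗𝔰(D_k, S)` with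
`π ∘ ι = id_S` — if and only if `S` is cyclic (generated as a `k`-algebra by the
`G`-orbit of a single point) and s-projective. -/
theorem standard_subalgebra_of_Dk_iff_cyclic_and_s_projective
    (k G : Type u) [Field k] [Group G] [Fintype G] [Nontrivial G]
    (p : ℕ) (hp : p.Prime) [CharP k p] (hG : IsPGroup p G)
    (S : Type u) [CommRing S] [Algebra k S] [MulSemiringAction G S] [SMulCommClass G k S]
    (hS : IsTS k G S) :
    (∃ (ι : S →ₐ[k] Dk k G) (π : Dk k G →ₐ[k] S),
        IsEquivariant G ⇑ι ∧ IsEquivariant G ⇑π ∧ π.comp ι = AlgHom.id k S)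
      ↔
    ((∃ c : S, (∑ g : G, g • c) = 1 ∧
        Algebra.adjoin k (Set.range fun g : G => g • c) = ⊤) ∧
      IsSProjective k G S) := by
  constructor
  · rintro ⟨ι, π, hιe, hπe, hπι⟩
    have hπs : Function.Surjective ⇑π := by
      intro s
      exact ⟨ι s, AlgHom.congr_fun hπι s⟩
    constructor
    · refine ⟨π (xg k G 1), ?_, ?_⟩
      · have h1 : ∀ g : G, g • π (xg k G 1) = π (xg k G g) := by
          intro g
          rw [← hπe, Dk_smul_xg, mul_one]
        rw [Finset.sum_congr rfl (fun g _ => h1 g), ← map_sum, Dk_sum_xg, map_one]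
      · have hfun : (fun g : G => g • π (xg k G 1))
            = ⇑π ∘ (fun g : G => g • xg k G 1) := by
          funext g
          show g • π (xg k G 1) = π (g • xg k G 1)
          rw [hπe]
        rw [hfun, Set.range_comp, ← AlgHom.map_adjoin, Dk_adjoin k G, Algebra.map_top,
          (AlgHom.range_eq_top _).mpr hπs]
    · intro A B _ _ _ _ _ _ _ _ hA hB α hαe hαs β hβe
      obtain ⟨θ', hθ'e, hθ'c⟩ := Dk_sProjective k G A B hA hB α hαe hαs
        (β.comp π) (fun g x => by
          show β (π (g • x)) = g • β (π x)
          rw [hπe, hβe])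
      refine ⟨θ'.comp ι, fun g x => by
        show θ' (ι (g • x)) = g • θ' (ι x)
        rw [hιe, hθ'e], ?_⟩
      rw [← AlgHom.comp_assoc, hθ'c, AlgHom.comp_assoc, hπι, AlgHom.comp_id]
  · rintro ⟨⟨c, hc1, hcgen⟩, hproj⟩
    have hπe := pointHom_equivariant k G S c hc1
    set π := pointHom k G S c hc1 with hπdef
    have hπs : Function.Surjective ⇑π := by
      rw [← AlgHom.range_eq_top]
      rw [eq_top_iff, ← hcgen]
      apply Algebra.adjoin_le
      rintro _ ⟨g, rfl⟩
      exact ⟨xg k G g, pointHom_xg k G S c hc1 g⟩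
    obtain ⟨θ, hθe, hθc⟩ := hproj (Dk k G) S (Dk_isTS k G) hS π hπe hπs
      (AlgHom.id k S) (fun g x => rfl)
    exact ⟨θ, π, hθe, hπe, hθc⟩
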